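/- arXiv:2405.03621 — 2 statements merged into one kernel-verified Lean document; each statement's English description precedes it below -/
import Mathlib

section
/- Fix integers n ≥ 0 and d ≥ 1. For every finite abelian group A that can be generated by at most n elements (i.e., of rank at most n), the number of subgroups B ≤ A of index at most d is at most d^n · a_d, where a_d denotes the number of isomorphism classes of abelian groups of order at most d. -/
/-- Isomorphism relation between abelian group structures on finite types of
order `1, …, d` (the type `Fin (m+1)` for `m : Fin d`). -/
def abGroupIsoRel (d : ℕ) (x y : (m : Fin d) × CommGroup (Fin ((m : ℕ) + 1))) : Prop :=
  letI := x.2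
  letI := y.2
  Nonempty (Fin ((x.1 : ℕ) + 1) ≃* Fin ((y.1 : ℕ) + 1))

/-- `abGroupClassCount d` is the number of isomorphism classes of abelian groups of
order at most `d`. -/
noncomputable def abGroupClassCount (d : ℕ) : ℕ := Nat.card (Quot (abGroupIsoRel d))

/-- The trivial commutative group structure on `Fin 1`. -/
def commGroupFinOne : CommGroup (Fin 1) where
  mul _ _ := 0
  one := 0
  inv _ := 0
  npow _ _ := 0
  npow_zero := by intros; rfl
  npow_succ := by intros; rfl
  mul_assoc := by decide
  one_mul := by decide
  mul_one := by decide
  inv_mul_cancel := by decide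
  div _ _ := 0
  mul_comm := by decide

theorem abGroupClassCount_pos (d : ℕ) (hd : 1 ≤ d) : 0 < abGroupClassCount d := by
  have : Nonempty (Quot (abGroupIsoRel d)) :=
    ⟨Quot.mk _ ⟨(⟨0, hd⟩ : Fin d), commGroupFinOne⟩⟩
  have hfin : Finite ((m : Fin d) × CommGroup (Fin ((m : ℕ) + 1))) := by
    have : ∀ m : Fin d, Finite (CommGroup (Fin ((m : ℕ) + 1))) := fun m =>
      Finite.of_injective (fun s : CommGroup (Fin ((m : ℕ) + 1)) => s.mul)
        fun _ _ h => CommGroup.ext h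
    exact Finite.instSigma
  have : Finite (Quot (abGroupIsoRel d)) :=
    Finite.of_surjective _ (Quot.mk_surjective (r := abGroupIsoRel d))
  exact Nat.card_pos

/-- Key counting step: adjoining one extra generator multiplies the number of
subgroups of index at most `d` by at most `d`. -/
theorem step_count {G : Type*} [CommGroup G] [Finite G] (d : ℕ) (hd : 1 ≤ d)
    (g : G) (H' : Subgroup G) (hGen : H' ⊔ Subgroup.zpowers g = ⊤) :
    Nat.card {B : Subgroup G // B.index ≤ d} ≤
      Nat.card {C : Subgroup ↥H' // C.index ≤ d} * d := by
  classical
  -- decoding function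
  let dec : {C : Subgroup ↥H' // C.index ≤ d} → ℕ → Subgroup G := fun C c =>
    (C.1.map H'.subtype) ⊔ Subgroup.zpowers (g ^ (c / C.1.index + 1) *
      ((Quotient.out ((Finite.equivFinOfCardEq (Subgroup.index_eq_card C.1).symm).symm
        ⟨c % C.1.index,
          Nat.mod_lt _ (Nat.pos_of_ne_zero Subgroup.index_ne_zero_of_finite)⟩) : ↥H') : G))
  have key : ∀ B : {B : Subgroup G // B.index ≤ d},
      ∃ (C : {C : Subgroup ↥H' // C.index ≤ d}) (c : Fin d), B.1 = dec C c.1 := by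
    rintro ⟨B, hBd⟩
    have hk0 : B.index ≠ 0 := Subgroup.index_ne_zero_of_finite
    set φ := QuotientGroup.mk' B with hφ
    set P : Subgroup (G ⧸ B) := H'.map φ with hPdef
    set ψ := (QuotientGroup.mk' P).comp φ with hψ
    have hψsurj : Function.Surjective ψ :=
      (QuotientGroup.mk'_surjective P).comp (QuotientGroup.mk'_surjective B)
    have hH'ker : H' ≤ ψ.ker := by
      intro h hh
      have : φ h ∈ P := Subgroup.mem_map_of_mem φ hh
      simpa [ψ, MonoidHom.mem_ker, QuotientGroup.eq_one_iff] using this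
    have htop : Subgroup.zpowers (ψ g) = ⊤ := by
      have h1 : Subgroup.map ψ ⊤ = ⊤ := Subgroup.map_top_of_surjective ψ hψsurj
      rw [← hGen, Subgroup.map_sup, (Subgroup.map_eq_bot_iff _).mpr hH'ker, bot_sup_eq,
        MonoidHom.map_zpowers] at h1
      exact h1
    set j := orderOf (ψ g) with hjdef
    have hj0 : 0 < j := orderOf_pos _
    set C : Subgroup ↥H' := B.subgroupOf H' with hCdef
    set k' := C.index with hk'def
    have hk'0 : k' ≠ 0 := Subgroup.index_ne_zero_of_finite
    -- card P = k'
    set ρ : ↥H' →* G ⧸ B := φ.comp H'.subtype with hρ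
    have hkerρ : ρ.ker = C := by
      ext x
      simp [ρ, hφ, MonoidHom.mem_ker, hCdef, Subgroup.mem_subgroupOf, QuotientGroup.mk'_apply,
        QuotientGroup.eq_one_iff]
    have hrangeρ : ρ.range = P := by
      ext x
      simp only [MonoidHom.mem_range, hPdef, Subgroup.mem_map, hρ, MonoidHom.comp_apply]
      constructor
      · rintro ⟨y, hy⟩; exact ⟨(y : G), y.2, hy⟩
      · rintro ⟨a, ha, haeq⟩; exact ⟨⟨a, ha⟩, haeq⟩
    have hcardP : Nat.card P = k' := by
      have h2 := Nat.card_congr (QuotientGroup.quotientKerEquivRange ρ).toEquiv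
      rw [hkerρ, hrangeρ] at h2
      rw [← h2, hk'def, Subgroup.index_eq_card]
    have hcardT : j = Nat.card ((G ⧸ B) ⧸ P) := by
      rw [hjdef, ← Nat.card_zpowers, htop, Subgroup.card_top]
    have hkk : B.index = j * k' := by
      rw [Subgroup.index_eq_card, Subgroup.card_eq_card_quotient_mul_card_subgroup P,
        ← hcardT, hcardP]
    have hk'd : k' ≤ d := le_trans (Nat.le_mul_of_pos_left _ hj0) (hkk ▸ hBd)
    -- find u' ∈ H' with φ u' = φ (g ^ j)
    have hgj : φ (g ^ j) ∈ P := by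
      have h3 : ψ (g ^ j) = 1 := by rw [map_pow]; exact pow_orderOf_eq_one (ψ g)
      rw [hψ, MonoidHom.comp_apply, QuotientGroup.mk'_apply, QuotientGroup.eq_one_iff] at h3
      exact h3
    obtain ⟨u', hu', hu'eq⟩ := Subgroup.mem_map.mp hgj
    have hvB0 : g ^ j * u'⁻¹ ∈ B := by
      have h4 : φ (g ^ j * u'⁻¹) = 1 := by
        rw [map_mul, map_inv, hu'eq, mul_inv_cancel]
      rw [hφ, QuotientGroup.mk'_apply, QuotientGroup.eq_one_iff] at h4
      exact h4
    -- the canonical representative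
    set uu : ↥H' := ⟨u'⁻¹, inv_mem hu'⟩ with huu
    set ub : ↥H' ⧸ C := QuotientGroup.mk uu with hub
    set u₀ : ↥H' := Quotient.out ub with hu₀
    have hmku₀ : (QuotientGroup.mk u₀ : ↥H' ⧸ C) = QuotientGroup.mk uu := by
      rw [hu₀, hub]; exact QuotientGroup.out_eq' _
    have hc : uu⁻¹ * u₀ ∈ C := by
      have := QuotientGroup.eq.mp hmku₀.symm
      exact this
    have hcB : ((uu⁻¹ * u₀ : ↥H') : G) ∈ B := Subgroup.mem_subgroupOf.mp hc
    set v : G := g ^ j * (u₀ : G) with hv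
    have hvB : v ∈ B := by
      have h5 : v = (g ^ j * u'⁻¹) * ((uu⁻¹ * u₀ : ↥H') : G) := by
        rw [hv]
        push_cast [huu]
        rw [mul_assoc, inv_inv, inv_mul_cancel_left]
      rw [h5]
      exact mul_mem hvB0 hcB
    -- main decomposition
    have hBdec : B = C.map H'.subtype ⊔ Subgroup.zpowers v := by
      apply le_antisymm
      · intro b hb
        have hb1 : b ∈ H' ⊔ Subgroup.zpowers g := by rw [hGen]; exact Subgroup.mem_top b
        obtain ⟨h, hh, z, hz, hhz⟩ := Subgroup.mem_sup.mp hb1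
        obtain ⟨m, hm⟩ := Subgroup.mem_zpowers_iff.mp hz
        have hψh : ψ h = 1 := hH'ker hh
        have hψb : ψ b = 1 := by
          have : φ b = 1 := (QuotientGroup.eq_one_iff b).mpr hb
          simp [ψ, MonoidHom.comp_apply, this]
        have hψz : (ψ g) ^ m = 1 := by
          rw [← map_zpow, hm]
          have h6 := congrArg ψ hhz
          rw [map_mul, hψh, one_mul, hψb] at h6
          exact h6
        obtain ⟨t, ht⟩ := orderOf_dvd_iff_zpow_eq_one.mpr hψz
        have hvt : v ^ t = g ^ m * ((u₀ : G)) ^ t := by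
          rw [hv, mul_zpow, ht, zpow_mul, zpow_natCast]
        have hbw : b * (v ^ t)⁻¹ = h * (((u₀ : G)) ^ t)⁻¹ := by
          rw [← hhz, ← hm, hvt, mul_inv, ← mul_assoc, mul_inv_cancel_right]
        have hwmem : b * (v ^ t)⁻¹ ∈ C.map H'.subtype := by
          rw [hCdef, Subgroup.subgroupOf_map_subtype]
          refine Subgroup.mem_inf.mpr ⟨?_, ?_⟩
          · exact mul_mem hb (inv_mem (B.zpow_mem hvB t))
          · rw [hbw]
            exact mul_mem hh (inv_mem (H'.zpow_mem u₀.2 t))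
        have hbeq : b = (b * (v ^ t)⁻¹) * v ^ t := (inv_mul_cancel_right b (v ^ t)).symm
        rw [hbeq]
        exact mul_mem (le_sup_left (α := Subgroup G) hwmem)
          ((le_sup_right : Subgroup.zpowers v ≤ _)
            ((Subgroup.zpowers v).zpow_mem (Subgroup.mem_zpowers v) t))
      · apply sup_le
        · rw [hCdef, Subgroup.subgroupOf_map_subtype]; exact inf_le_left
        · exact Subgroup.zpowers_le.mpr hvB
    -- encode
    set enum : (↥H' ⧸ C) ≃ Fin C.index :=
      Finite.equivFinOfCardEq (Subgroup.index_eq_card C).symm with henum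
    set code : ℕ := (enum ub).1 + (j - 1) * k' with hcode
    have hlt : (enum ub).1 < k' := (enum ub).2
    have hjk : (j - 1) * k' + k' = j * k' := by
      calc (j - 1) * k' + k' = ((j - 1) + 1) * k' := by ring
        _ = j * k' := by rw [Nat.sub_add_cancel hj0]
    have hcoded : code < d := by
      have : code < j * k' := by omega
      omega
    have e1 : code % k' = (enum ub).1 := by
      rw [hcode, Nat.add_mul_mod_self_right, Nat.mod_eq_of_lt hlt]
    have e2 : code / k' + 1 = j := by
      rw [hcode, Nat.add_mul_div_right _ _ (Nat.pos_of_ne_zero hk'0),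
        Nat.div_eq_of_lt hlt, zero_add]
      omega
    refine ⟨⟨C, hk'd⟩, ⟨code, hcoded⟩, ?_⟩
    show B = dec ⟨C, hk'd⟩ code
    simp only [dec]
    rw [hBdec]
    congr 1
    · -- zpowers part
      congr 1
      rw [hv]
      congr 1
      · rw [e2]
      · congr 1
        have e3 : (⟨code % C.index,
            Nat.mod_lt _ (Nat.pos_of_ne_zero Subgroup.index_ne_zero_of_finite)⟩ :
              Fin C.index) = enum ub := by
          apply Fin.ext
          exact e1
        rw [e3, Equiv.symm_apply_apply]
  choose F c hFc using key
  have inj : Function.Injective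
      (fun B : {B : Subgroup G // B.index ≤ d} => (F B, c B)) := by
    intro B1 B2 h
    have h1 : F B1 = F B2 := congrArg Prod.fst h
    have h2 : c B1 = c B2 := congrArg Prod.snd h
    apply Subtype.ext
    rw [hFc B1, hFc B2, h1, h2]
  calc Nat.card {B : Subgroup G // B.index ≤ d}
      ≤ Nat.card ({C : Subgroup ↥H' // C.index ≤ d} × Fin d) :=
        Nat.card_le_card_of_injective _ inj
    _ = Nat.card {C : Subgroup ↥H' // C.index ≤ d} * d := by
        rw [Nat.card_prod, Nat.card_eq_fintype_card (α := Fin d), Fintype.card_fin]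

/-- Induction on the number of generators. -/
theorem count_le_pow (d : ℕ) (hd : 1 ≤ d) : ∀ (s : ℕ) {G : Type u} [CommGroup G] [Finite G]
    (S : Finset G), S.card ≤ s → Subgroup.closure (S : Set G) = ⊤ →
    Nat.card {B : Subgroup G // B.index ≤ d} ≤ d ^ s := by
  intro s
  induction s with
  | zero =>
    intro G _ _ S hcard hgen
    have hS : S = ∅ := Finset.card_eq_zero.mp (Nat.le_zero.mp hcard)
    rw [hS] at hgen
    simp only [Finset.coe_empty, Subgroup.closure_empty] at hgen
    have hsub : Subsingleton G := by
      constructor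
      intro a b
      have ha : a ∈ (⊥ : Subgroup G) := hgen ▸ Subgroup.mem_top a
      have hb : b ∈ (⊥ : Subgroup G) := hgen ▸ Subgroup.mem_top b
      rw [Subgroup.mem_bot] at ha hb
      rw [ha, hb]
    have : Subsingleton {B : Subgroup G // B.index ≤ d} := by
      constructor
      rintro ⟨B1, _⟩ ⟨B2, _⟩
      apply Subtype.ext
      ext x
      have hx : x = 1 := Subsingleton.elim x 1
      rw [hx]
      exact iff_of_true (one_mem _) (one_mem _)
    rw [pow_zero]
    exact Finite.card_le_one_iff_subsingleton.mpr this
  | succ s ih =>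
    intro G _ _ S hcard hgen
    classical
    by_cases hle : S.card ≤ s
    · exact le_trans (ih S hle hgen) (Nat.pow_le_pow_right hd (Nat.le_succ s))
    · have hScard : S.card = s + 1 := by omega
      have hSne : S.Nonempty := Finset.card_pos.mp (by omega)
      obtain ⟨g, hg⟩ := hSne
      set S₀ := S.erase g with hS₀
      have hS₀card : S₀.card = s := by
        rw [hS₀, Finset.card_erase_of_mem hg, hScard]
        omega
      set H' := Subgroup.closure (S₀ : Set G) with hH'
      have hGen : H' ⊔ Subgroup.zpowers g = ⊤ := by
        rw [hH', Subgroup.zpowers_eq_closure, ← Subgroup.closure_union, ← hgen]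
        congr 1
        rw [Set.union_comm, ← Set.insert_eq]
        rw [← Finset.coe_insert, Finset.insert_erase hg]
      -- generating finset for H'
      set S' : Finset ↥H' := S₀.attach.map
        ⟨fun (x : {a // a ∈ S₀}) => ⟨(x : G), Subgroup.subset_closure x.2⟩,
          fun a b h => Subtype.ext (by simpa using congrArg Subtype.val h)⟩ with hS'
      have hS'card : S'.card = s := by
        rw [hS', Finset.card_map, Finset.card_attach, hS₀card]
      have hS'gen : Subgroup.closure (S' : Set ↥H') = ⊤ := by
        have hset : (S' : Set ↥H') = ((↑) : ↥H' → G) ⁻¹' ↑S₀ := by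
          ext ⟨x, hx⟩
          simp [hS']
          exact ⟨fun ⟨a, b, h⟩ => (show a = x from Subtype.ext_iff.mp h) ▸ b, fun h => ⟨x, h, rfl⟩⟩
        rw [hset, hH']
        exact Subgroup.closure_closure_coe_preimage
      have hstep := step_count d hd g H' hGen
      have hind := ih S' (le_of_eq hS'card) hS'gen
      calc Nat.card {B : Subgroup G // B.index ≤ d}
          ≤ Nat.card {C : Subgroup ↥H' // C.index ≤ d} * d := hstep
        _ ≤ d ^ s * d := Nat.mul_le_mul_right d hind
        _ = d ^ (s + 1) := (pow_succ d s).symm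

/-- For every finite abelian group `A` generated by at most `n`
elements, the number of subgroups `B ≤ A` of index at most `d` is at most
`d ^ n * a_d`, where `a_d` is the number of isomorphism classes of abelian
groups of order at most `d`. -/
theorem subgroups_of_bounded_index_count (n d : ℕ) (hd : 1 ≤ d)
    {A : Type*} [CommGroup A] [Finite A]
    (hA : ∃ S : Finset A, S.card ≤ n ∧ Subgroup.closure (S : Set A) = ⊤) :
    Nat.card {B : Subgroup A // B.index ≤ d} ≤ d ^ n * abGroupClassCount d := by
  obtain ⟨S, hScard, hSgen⟩ := hA
  have h1 : Nat.card {B : Subgroup A // B.index ≤ d} ≤ d ^ n :=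
    count_le_pow d hd n S hScard hSgen
  have h2 : 1 ≤ abGroupClassCount d := abGroupClassCount_pos d hd
  calc Nat.card {B : Subgroup A // B.index ≤ d} ≤ d ^ n := h1
    _ = d ^ n * 1 := (mul_one _).symm
    _ ≤ d ^ n * abGroupClassCount d := Nat.mul_le_mul_left _ h2
end

section
/- Let G be a finite group and A ≤ G a normal abelian subgroup of index d = [G : A] which can be generated by at most n elements. Then the set S = { φ(A) : φ ∈ Aut(G) } of images of A under automorphisms of G has cardinality at most d^{3n} · a_d, where a_d denotes the number of isomorphism classes of abelian groups of order at most d. -/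
instance abGroupFinite (k : ℕ) : Finite (CommGroup (Fin k)) := by
  have hinj : Function.Injective
      (fun c : CommGroup (Fin k) => c.mul) := by
    intro c₁ c₂ h
    exact CommGroup.ext h
  exact Finite.of_injective _ hinj

instance (d : ℕ) : Finite (Quot (abGroupIsoRel d)) :=
  Finite.of_surjective (Quot.mk _) (fun q => Quot.exists_rep q)

/-- The class count is positive whenever `d` is positive, since the trivial group
provides at least one isomorphism class. -/
lemma one_le_abGroupClassCount {d : ℕ} (hd : d ≠ 0) : 1 ≤ abGroupClassCount d := by
  haveI : Nonempty (Quot (abGroupIsoRel d)) :=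
    ⟨Quot.mk _ ⟨⟨0, Nat.pos_of_ne_zero hd⟩, ((Equiv.equivPUnit (Fin 1) : Fin 1 ≃ Unit)).commGroup⟩⟩
  exact Nat.one_le_iff_ne_zero.mpr Nat.card_pos.ne'

/-- if `G` is a finite group and `A ≤ G` is a normal abelian
subgroup of index `d` generated by at most `n` elements, then the set of images
of `A` under automorphisms of `G` has at most `d ^ (3n) * a_d` elements. -/
theorem card_automorphic_images_le {G : Type*} [Group G] [Finite G]
    (A : Subgroup G) (hN : A.Normal) (hab : IsMulCommutative A) (n : ℕ)
    (hgen : ∃ S : Finset G, S.card ≤ n ∧ Subgroup.closure (S : Set G) = A) :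
    Nat.card {B : Subgroup G // ∃ φ : G ≃* G, A.map φ.toMonoidHom = B} ≤
      A.index ^ (3 * n) * abGroupClassCount A.index := by
  classical
  haveI := hab
  haveI := hN
  obtain ⟨S, hScard, hSclo⟩ := hgen
  set d := A.index with hd
  have hdne : d ≠ 0 := Subgroup.index_ne_zero_of_finite
  -- a family of at most `n` generators for `A`
  set a : Fin n → G :=
    fun i => if h : (i : ℕ) < S.card then (S.equivFin.symm ⟨i, h⟩ : G) else 1 with ha
  have haS : ∀ i, a i ∈ A := by
    intro i
    by_cases h : (i : ℕ) < S.card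
    · simp only [ha, dif_pos h]
      exact hSclo ▸ Subgroup.subset_closure (S.equivFin.symm ⟨i, h⟩).2
    · simp only [ha, dif_neg h]
      exact one_mem A
  have hclo : Subgroup.closure (Set.range a) = A := by
    apply le_antisymm
    · rw [Subgroup.closure_le]
      rintro g ⟨i, rfl⟩
      exact haS i
    · conv_lhs => rw [← hSclo]
      rw [Subgroup.closure_le]
      intro s hs
      have hlt : ((S.equivFin ⟨s, hs⟩ : Fin S.card) : ℕ) < S.card := (S.equivFin ⟨s, hs⟩).2
      have hlt2 : ((S.equivFin ⟨s, hs⟩ : Fin S.card) : ℕ) < n := lt_of_lt_of_le hlt hScard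
      apply Subgroup.subset_closure
      refine ⟨⟨_, hlt2⟩, ?_⟩
      simp only [ha, dif_pos hlt]
      simp
  set a' : Fin n → ↥A := fun i => ⟨a i, haS i⟩ with ha'
  have hclo' : Subgroup.closure (Set.range a') = ⊤ := by
    rw [eq_top_iff]
    rintro ⟨x, hx⟩ -
    have hx' : x ∈ Subgroup.closure (Set.range a) := hclo.symm ▸ hx
    refine Subgroup.closure_induction
      (p := fun g _ => ∀ (hgA : g ∈ A), (⟨g, hgA⟩ : ↥A) ∈ Subgroup.closure (Set.range a'))
      ?_ ?_ ?_ ?_ hx' hx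
    · rintro g ⟨i, rfl⟩ hgA
      exact Subgroup.subset_closure ⟨i, Subtype.ext rfl⟩
    · intro h1A
      exact one_mem _
    · intro x y hx hy px py hxyA
      exact mul_mem (px (hclo ▸ hx)) (py (hclo ▸ hy))
    · intro x hx px hxiA
      exact inv_mem (px (hclo ▸ hx))
  -- homomorphisms out of `A` are determined by the generators
  have homext : ∀ (ψ₁ ψ₂ : ↥A →* G ⧸ A),
      (∀ i, ψ₁ (a' i) = ψ₂ (a' i)) → ψ₁ = ψ₂ := by
    intro ψ₁ ψ₂ h
    apply MonoidHom.eq_of_eqOn_dense hclo'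
    rintro x ⟨i, rfl⟩
    exact h i
  -- the subtype of automorphic images
  set Sub := {B : Subgroup G // ∃ φ : G ≃* G, A.map φ.toMonoidHom = B} with hSub
  let φF : Sub → (G ≃* G) := fun B => B.2.choose
  have hφF : ∀ B : Sub, A.map (φF B).toMonoidHom = B.1 := fun B => B.2.choose_spec
  let gF : Sub → Fin n → G := fun B i => φF B (a i)
  have hgmem : ∀ (B : Sub) i, gF B i ∈ B.1 := by
    intro B i
    rw [← hφF B]
    exact ⟨a i, haS i, rfl⟩
  have hBclo : ∀ B : Sub, B.1 = Subgroup.closure (Set.range (gF B)) := by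
    intro B
    rw [← hφF B, ← hclo, MonoidHom.map_closure]
    congr 1
    rw [← Set.range_comp]
    rfl
  let wF : Sub → Fin n → G ⧸ A := fun B i => ↑(gF B i)
  have hcmem : ∀ (B : Sub) i, ((wF B i).out⁻¹ * gF B i) ∈ A := by
    intro B i
    have h1 : ((wF B i).out : G ⧸ A) = ↑(gF B i) := QuotientGroup.out_eq' (wF B i)
    exact QuotientGroup.eq.mp h1
  let cF : Sub → Fin n → ↥A := fun B i => ⟨(wF B i).out⁻¹ * gF B i, hcmem B i⟩
  have hgF_eq : ∀ (B : Sub) i, gF B i = (wF B i).out * ((cF B i : ↥A) : G) := by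
    intro B i
    show gF B i = (wF B i).out * ((wF B i).out⁻¹ * gF B i)
    group
  -- normality of the images
  have hBnormal : ∀ B : Sub, B.1.Normal := by
    intro B
    rw [← hφF B]
    exact hN.map _ (φF B).surjective
  -- membership transported by the automorphism
  have hmemiff : ∀ (B : Sub) (x : G), (φF B).symm x ∈ A ↔ x ∈ B.1 := by
    intro B x
    constructor
    · intro hxA
      rw [← hφF B]
      exact ⟨(φF B).symm x, hxA, by simp⟩
    · intro hxB
      rw [← hφF B] at hxB
      obtain ⟨y, hyA, rfl⟩ := hxB
      simpa using hyA
  -- the homomorphism `A →* G ⧸ A` encoding `A ⊓ B`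
  let ψF : Sub → (↥A →* G ⧸ A) := fun B =>
    letI := hBnormal B
    ((QuotientGroup.map B.1 A (φF B).symm.toMonoidHom
        (by
          intro x hx
          rw [Subgroup.mem_comap]
          exact (hmemiff B x).mpr hx)).comp (QuotientGroup.mk' B.1)).comp A.subtype
  have hψval : ∀ (B : Sub) (x : ↥A), ψF B x = ((φF B).symm (x : G) : G ⧸ A) := by
    intro B x
    letI := hBnormal B
    simp [ψF, QuotientGroup.map_mk']
  have hψker : ∀ (B : Sub) (x : ↥A), ψF B x = 1 ↔ (x : G) ∈ B.1 := by
    intro B x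
    rw [hψval B x, QuotientGroup.eq_one_iff]
    exact hmemiff B (x : G)
  -- the encoding map
  let T := (↥A →* G ⧸ A) × (Fin n → G ⧸ A) × (Fin n → G ⧸ A)
  let enc : Sub → T := fun B => (ψF B, fun i => ψF B (cF B i), wF B)
  have hinj : Function.Injective enc := by
    intro B₁ B₂ hEq
    have hψ : ψF B₁ = ψF B₂ := congrArg Prod.fst hEq
    have hv : (fun i => ψF B₁ (cF B₁ i)) = (fun i => ψF B₂ (cF B₂ i)) :=
      congrArg (fun t : T => t.2.1) hEq
    have hw : wF B₁ = wF B₂ := congrArg (fun t : T => t.2.2) hEq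
    have key : ∀ (B B' : Sub), wF B = wF B' →
        (∀ i, (((cF B' i)⁻¹ * cF B i : ↥A) : G) ∈ B'.1) → B.1 ≤ B'.1 := by
      intro B B' hww hcc
      rw [hBclo B, Subgroup.closure_le]
      rintro x ⟨i, rfl⟩
      have hout : (wF B i).out = (wF B' i).out := by rw [hww]
      have heq : gF B i = gF B' i * (((cF B' i)⁻¹ * cF B i : ↥A) : G) := by
        rw [hgF_eq B i, hgF_eq B' i, hout]
        push_cast
        group
      show gF B i ∈ B'.1
      rw [heq]
      exact mul_mem (hgmem B' i) (hcc i)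
    have hcc12 : ∀ i, (((cF B₂ i)⁻¹ * cF B₁ i : ↥A) : G) ∈ B₂.1 := by
      intro i
      rw [← hψker B₂]
      have h1 : ψF B₂ (cF B₁ i) = ψF B₂ (cF B₂ i) := by
        have := congrFun hv i
        rw [← this, hψ]
      rw [map_mul, map_inv, h1]
      group
    have hcc21 : ∀ i, (((cF B₁ i)⁻¹ * cF B₂ i : ↥A) : G) ∈ B₁.1 := by
      intro i
      rw [← hψker B₁]
      have h1 : ψF B₁ (cF B₂ i) = ψF B₁ (cF B₁ i) := by
        have := congrFun hv i
        rw [this, hψ]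
      rw [map_mul, map_inv, h1]
      group
    exact Subtype.ext (le_antisymm (key B₁ B₂ hw hcc12) (key B₂ B₁ hw.symm hcc21))
  -- cardinality computations
  haveI hfinHom : Finite (↥A →* G ⧸ A) :=
    Finite.of_injective (fun f => (f : ↥A → G ⧸ A)) DFunLike.coe_injective
  have hQA : Nat.card (G ⧸ A) = d := (Subgroup.index_eq_card A).symm
  have hcard : Nat.card Sub ≤ Nat.card T := Nat.card_le_card_of_injective enc hinj
  have hfun : Nat.card (Fin n → G ⧸ A) = d ^ n := by
    rw [Nat.card_fun, hQA]
    simp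
  have hHom : Nat.card (↥A →* G ⧸ A) ≤ d ^ n := by
    have hinj2 : Function.Injective
        (fun (ψ : ↥A →* G ⧸ A) => (fun i : Fin n => ψ (a' i))) := by
      intro ψ₁ ψ₂ h
      exact homext ψ₁ ψ₂ (fun i => congrFun h i)
    calc Nat.card (↥A →* G ⧸ A) ≤ Nat.card (Fin n → G ⧸ A) :=
          Nat.card_le_card_of_injective _ hinj2
      _ = d ^ n := hfun
  have hT : Nat.card T ≤ d ^ (3 * n) := by
    have : Nat.card T = Nat.card (↥A →* G ⧸ A) * (d ^ n * d ^ n) := by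
      show Nat.card ((↥A →* G ⧸ A) × (Fin n → G ⧸ A) × (Fin n → G ⧸ A)) = _
      rw [Nat.card_prod, Nat.card_prod, hfun]
    rw [this]
    calc Nat.card (↥A →* G ⧸ A) * (d ^ n * d ^ n) ≤ d ^ n * (d ^ n * d ^ n) :=
          Nat.mul_le_mul_right _ hHom
      _ = d ^ (3 * n) := by ring
  calc Nat.card Sub ≤ Nat.card T := hcard
    _ ≤ d ^ (3 * n) := hT
    _ = d ^ (3 * n) * 1 := (mul_one _).symm
    _ ≤ d ^ (3 * n) * abGroupClassCount d :=
        Nat.mul_le_mul_left _ (one_le_abGroupClassCount hdne)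
end
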